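/- L_n equals the Z/2-linear span of the polynomials ρ(H), where ρ ranges over all linear automorphisms of V (acting on R by renaming variables) and H ranges over all polynomials of the form H = X_{e_1} ⋯ X_{e_i} · X_{e_1+⋯+e_i} · h with 1 < i ≤ n, where h is a nonzero squarefree homogeneous polynomial of degree n − i with d(h) = 0 (with h = 1 when i = n), and where, when i < n, for every monomial X_{v_1}⋯X_{v_{n−i}} in the support of h the images of v_1, …, v_{n−i} in the quotient space V / span{e_1, …, e_i} are linearly independent. -/

import Mathlib

open MvPolynomial

/-- The differential operator `d = Σ_{v∈V} ∂/∂X_v` on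
`MvPolynomial ((Z/2)^n) (ZMod 2)`. -/
noncomputable def dOp (n : ℕ) :
    MvPolynomial (Fin n → ZMod 2) (ZMod 2) →ₗ[ZMod 2]
      MvPolynomial (Fin n → ZMod 2) (ZMod 2) :=
  ∑ v : Fin n → ZMod 2, (pderiv v).toLinearMap

/-- A polynomial is squarefree if every monomial in its support has all exponents `≤ 1`
and does not involve the variable indexed by the zero vector. -/
def IsSqFree (n : ℕ) (p : MvPolynomial (Fin n → ZMod 2) (ZMod 2)) : Prop :=
  ∀ m ∈ p.support, (∀ v : Fin n → ZMod 2, m v ≤ 1) ∧ m 0 = 0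

/-- Membership in `V_n*`: `d p = 0` and every monomial of `p` has the form
`X_{v_1} ⋯ X_{v_n}` where `(v_1, …, v_n)` is a basis of `V = (Z/2)^n`. -/
def MemVstar (n : ℕ) (p : MvPolynomial (Fin n → ZMod 2) (ZMod 2)) : Prop :=
  dOp n p = 0 ∧
    ∀ m ∈ p.support, ∃ b : Module.Basis (Fin n) (ZMod 2) (Fin n → ZMod 2),
      m = ∑ j : Fin n, Finsupp.single (b j) 1

/-- Membership in `L_n`: squarefree homogeneous of degree `n+1`, `d H ∈ V_n*`, and the
`n+1` variables of each monomial span `V`. -/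
def MemL (n : ℕ) (H : MvPolynomial (Fin n → ZMod 2) (ZMod 2)) : Prop :=
  IsSqFree n H ∧ H.IsHomogeneous (n + 1) ∧ MemVstar n (dOp n H) ∧
    ∀ m ∈ H.support,
      Submodule.span (ZMod 2) (↑m.support : Set (Fin n → ZMod 2)) = ⊤

/-!
A monomial of `p ∈ L_n` is a set `S` of `n + 1` vectors spanning `V`. Such an `S` contains exactly
one circuit (nonempty zero-sum subset) `C(S)`: from two different ones we could delete two vectors
of `S` without shrinking its span. Grouping the monomials of `p` by their circuit writes
`p = ∑_K X_K h_K` with `X_K = ∏_{v ∈ K} X_v`. The monomials of `d p` are bases, so none of them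
contains a circuit, whereas in `d p = ∑_K (d(X_K) h_K + X_K d(h_K))` the monomials containing `K`
all come from `X_K d(h_K)`; hence `d h_K = 0`. A linear automorphism moving `K` to
`{e_1, …, e_i, e_1 + ⋯ + e_i}` then exhibits `X_K h_K` as a generator.

Conversely, if `h` is a cofactor for the circuit `K` and `T` is the support of a monomial of `h`,
the only zero-sum subsets of `K ∪ T` are `∅` and `K`. So the monomials `(K \ {v}) ∪ T` of
`d(X_K h) = d(X_K) h` are bases, and the generators lie in `L_n`, which is a subspace.
-/

open Finset

lemma zmod_two_eq_zero_or_eq_one (c : ZMod 2) : c = 0 ∨ c = 1 := by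
  revert c; decide

section IndepMod

variable {ι M N : Type*} [AddCommGroup M] [Module (ZMod 2) M] [AddCommGroup N]
  [Module (ZMod 2) N]

lemma sum_smul_eq_sum_filter (s : Finset ι) (c : ι → ZMod 2) (v : ι → M) :
    ∑ i ∈ s, c i • v i = ∑ i ∈ s with c i = 1, v i := by
  rw [sum_filter]
  refine sum_congr rfl fun i _ => ?_
  rcases zmod_two_eq_zero_or_eq_one (c i) with h | h <;> simp [h]

lemma linearIndepOn_iff_forall_sum_eq_zero (v : ι → M) (T : Finset ι) :
    LinearIndepOn (ZMod 2) v (T : Set ι) ↔ ∀ A ⊆ T, ∑ i ∈ A, v i = 0 → A = ∅ := by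
  classical
  rw [linearIndepOn_finset_iff]
  refine ⟨fun h A hAT hA => ?_, fun h c hc i hi => ?_⟩
  · have hfilter : {i ∈ T | (if i ∈ A then 1 else 0 : ZMod 2) = 1} = A := by
      ext i
      by_cases hi : i ∈ A
      · simp [hi, hAT hi]
      · simp [hi]
    have := h (fun i => if i ∈ A then 1 else 0) (by rw [sum_smul_eq_sum_filter, hfilter, hA])
    exact eq_empty_of_forall_notMem fun i hi => by simpa [hi] using this i (hAT hi)
  · rw [sum_smul_eq_sum_filter] at hc
    rcases zmod_two_eq_zero_or_eq_one (c i) with h' | h'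
    · exact h'
    · exact absurd (filter_eq_empty_iff.mp (h _ (filter_subset _ T) hc) hi) (by simpa using h')

lemma exists_subset_sum_eq_of_mem_span {T : Finset M} {x : M}
    (hx : x ∈ Submodule.span (ZMod 2) (T : Set M)) : ∃ B ⊆ T, ∑ v ∈ B, v = x := by
  obtain ⟨c, -, rfl⟩ := Submodule.mem_span_finset.mp hx
  exact ⟨_, filter_subset _ T, (sum_smul_eq_sum_filter T c id).symm⟩

lemma sum_erase_eq_of_sum_eq_zero [DecidableEq M] {A : Finset M} {x : M}
    (hA : ∑ v ∈ A, v = 0) (hx : x ∈ A) : ∑ v ∈ A.erase x, v = x := by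
  have h : x + ∑ v ∈ A.erase x, v = ∑ v ∈ A, v := add_sum_erase A (fun v => v) hx
  rw [hA] at h
  rw [eq_neg_of_add_eq_zero_right h, ZModModule.neg_eq_self]

lemma sum_image_linearEquiv [DecidableEq N] (ρ : M ≃ₗ[ZMod 2] N) (B : Finset M) :
    ∑ v ∈ B.image ρ, v = ρ (∑ v ∈ B, v) := by
  rw [sum_image fun x _ y _ h => ρ.injective h, map_sum]

/-- Over `ZMod 2` a linear relation is a subset sum, so `IndepMod U T` says that the vectors of `T`
are linearly independent modulo `U` (`indepMod_iff_linearIndepOn_mkQ`). -/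
def IndepMod (U : Submodule (ZMod 2) M) (T : Finset M) : Prop :=
  ∀ A ⊆ T, ∑ v ∈ A, v ∈ U → A = ∅

lemma indepMod_iff_linearIndepOn_mkQ (U : Submodule (ZMod 2) M) (T : Finset M) :
    IndepMod U T ↔ LinearIndepOn (ZMod 2) U.mkQ (T : Set M) := by
  rw [linearIndepOn_iff_forall_sum_eq_zero]
  refine forall₂_congr fun A _ => ?_
  rw [← map_sum, Submodule.mkQ_apply, Submodule.Quotient.mk_eq_zero]

lemma indepMod_bot_iff_linearIndepOn (T : Finset M) :
    IndepMod ⊥ T ↔ LinearIndepOn (ZMod 2) id (T : Set M) := by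
  simp only [linearIndepOn_iff_forall_sum_eq_zero, Submodule.mem_bot, IndepMod, id]

lemma IndepMod.image [DecidableEq N] {U : Submodule (ZMod 2) M} {T : Finset M}
    (hT : IndepMod U T) (ρ : M ≃ₗ[ZMod 2] N) :
    IndepMod (U.map (ρ : M →ₗ[ZMod 2] N)) (T.image ρ) := by
  intro A hA hAU
  obtain ⟨B, hB, rfl⟩ := subset_image_iff.mp hA
  rw [sum_image_linearEquiv, Submodule.mem_map_equiv, LinearEquiv.symm_apply_apply] at hAU
  rw [hT B hB hAU, image_empty]

end IndepMod

section Circuit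

variable {M N : Type*} [AddCommGroup M] [AddCommGroup N]

structure IsCircuit (K : Finset M) : Prop where
  nonempty : K.Nonempty
  sum_eq_zero : ∑ v ∈ K, v = 0
  eq_of_subset : ∀ A ⊆ K, A.Nonempty → ∑ v ∈ A, v = 0 → A = K

structure IsUniqueCircuit (S C : Finset M) : Prop where
  subset : C ⊆ S
  nonempty : C.Nonempty
  sum_eq_zero : ∑ v ∈ C, v = 0
  eq_of_subset : ∀ A ⊆ S, A.Nonempty → ∑ v ∈ A, v = 0 → A = C

lemma IsUniqueCircuit.isCircuit {S C : Finset M} (h : IsUniqueCircuit S C) : IsCircuit C :=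
  ⟨h.nonempty, h.sum_eq_zero, fun A hA => h.eq_of_subset A (hA.trans h.subset)⟩

lemma IsCircuit.zero_notMem {K : Finset M} (hK : IsCircuit K) (hcard : 2 ≤ #K) : (0 : M) ∉ K := by
  intro h0
  have := hK.eq_of_subset {0} (singleton_subset_iff.mpr h0) (singleton_nonempty 0)
    (sum_singleton _ _)
  rw [← this, card_singleton] at hcard
  omega

variable [Module (ZMod 2) M] [Module (ZMod 2) N]

namespace IsCircuit

variable {K T : Finset M}

lemma sum_erase [DecidableEq M] (hK : IsCircuit K) {x : M} (hx : x ∈ K) :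
    ∑ v ∈ K.erase x, v = x :=
  sum_erase_eq_of_sum_eq_zero hK.sum_eq_zero hx

lemma indepMod_erase [DecidableEq M] (hK : IsCircuit K) {x : M} (hx : x ∈ K) :
    IndepMod ⊥ (K.erase x) := by
  intro A hA hA0
  by_contra hne
  have hAK := hK.eq_of_subset A (hA.trans (erase_subset x K)) (nonempty_iff_ne_empty.mpr hne)
    ((Submodule.mem_bot _).mp hA0)
  exact notMem_erase x K (hA (hAK ▸ hx))

lemma three_le_card [DecidableEq M] (hK : IsCircuit K) (h0 : (0 : M) ∉ K) : 3 ≤ #K := by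
  by_contra! hlt
  have hsum := hK.sum_eq_zero
  interval_cases h : #K
  · exact absurd (card_eq_zero.mp h) hK.nonempty.ne_empty
  · obtain ⟨a, rfl⟩ := card_eq_one.mp h
    rw [sum_singleton] at hsum
    exact h0 (hsum ▸ mem_singleton_self a)
  · obtain ⟨a, b, hab, rfl⟩ := card_eq_two.mp h
    rw [sum_pair hab] at hsum
    exact hab (by rw [eq_neg_of_add_eq_zero_left hsum, ZModModule.neg_eq_self])

lemma image [DecidableEq N] (hK : IsCircuit K) (ρ : M ≃ₗ[ZMod 2] N) : IsCircuit (K.image ρ) := by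
  refine ⟨hK.nonempty.image ρ, by rw [sum_image_linearEquiv, hK.sum_eq_zero, map_zero],
    fun A hA hne hA0 => ?_⟩
  obtain ⟨B, hB, rfl⟩ := subset_image_iff.mp hA
  rw [sum_image_linearEquiv, map_eq_zero_iff _ ρ.injective] at hA0
  rw [hK.eq_of_subset B hB (image_nonempty.mp hne) hA0]

lemma _root_.IndepMod.disjoint (hT : IndepMod (Submodule.span (ZMod 2) (K : Set M)) T) :
    Disjoint K T :=
  disjoint_left.mpr fun x hxK hxT => singleton_ne_empty x <|
    hT {x} (singleton_subset_iff.mpr hxT) (by rw [sum_singleton]; exact Submodule.subset_span hxK)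

lemma eq_empty_or_eq_of_subset_union [DecidableEq M] (hK : IsCircuit K)
    (hT : IndepMod (Submodule.span (ZMod 2) (K : Set M)) T) {B : Finset M} (hB : B ⊆ K ∪ T)
    (hB0 : ∑ v ∈ B, v = 0) : B = ∅ ∨ B = K := by
  have hsplit := sum_sdiff (f := fun v => v) (inter_subset_left : B ∩ K ⊆ B)
  rw [hB0, sdiff_inter_self_left] at hsplit
  have hBK : B \ K = ∅ := hT _ (fun x hx => by
      obtain ⟨hxB, hxK⟩ := mem_sdiff.mp hx
      exact (mem_union.mp (hB hxB)).resolve_left hxK)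
    (by rw [eq_neg_of_add_eq_zero_left hsplit, ZModModule.neg_eq_self]
        exact Submodule.sum_mem _ fun v hv => Submodule.subset_span (mem_inter.mp hv).2)
  rcases B.eq_empty_or_nonempty with h | h
  · exact Or.inl h
  · exact Or.inr (hK.eq_of_subset B (sdiff_eq_empty_iff_subset.mp hBK) h hB0)

lemma indepMod_erase_union [DecidableEq M] (hK : IsCircuit K)
    (hT : IndepMod (Submodule.span (ZMod 2) (K : Set M)) T) {x : M} (hx : x ∈ K) :
    IndepMod ⊥ (K.erase x ∪ T) := by
  intro A hA hA0
  rcases hK.eq_empty_or_eq_of_subset_union hT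
    (hA.trans (union_subset_union (erase_subset x K) le_rfl)) ((Submodule.mem_bot _).mp hA0)
    with h | rfl
  · exact h
  · rcases mem_union.mp (hA hx) with h | h
    · exact absurd h (notMem_erase x A)
    · exact absurd h (disjoint_left.mp hT.disjoint hx)

end IsCircuit

variable [DecidableEq M]

lemma sum_notMem_of_indepMod {W : Finset M} (hW : IndepMod ⊥ W) (hcard : 2 ≤ #W) :
    ∑ v ∈ W, v ∉ W := by
  intro hmem
  have := hW _ (erase_subset _ W) (by rw [Submodule.mem_bot, sum_erase_eq_sub hmem, sub_self])
  rw [← card_erase_add_one hmem, this, card_empty] at hcard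
  omega

lemma isCircuit_insert_sum {W : Finset M} (hW : IndepMod ⊥ W) (hs : ∑ v ∈ W, v ∉ W) :
    IsCircuit (insert (∑ v ∈ W, v) W) := by
  refine ⟨insert_nonempty _ _, by rw [sum_insert hs, ZModModule.add_self],
    fun A hA hne hA0 => ?_⟩
  by_cases hsA : ∑ v ∈ W, v ∈ A
  · have hB : A.erase (∑ v ∈ W, v) ⊆ W := fun x hx =>
      (mem_insert.mp (hA (mem_of_mem_erase hx))).resolve_left (ne_of_mem_erase hx)
    have hrest := sum_sdiff (f := fun v => v) hB
    rw [sum_erase_eq_of_sum_eq_zero hA0 hsA, add_eq_right] at hrest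
    have hWB : W ⊆ A.erase (∑ v ∈ W, v) :=
      sdiff_eq_empty_iff_subset.mp (hW _ sdiff_subset ((Submodule.mem_bot _).mpr hrest))
    exact Subset.antisymm hA (insert_subset hsA (hWB.trans (erase_subset _ _)))
  · have := hW A (fun x hx => (mem_insert.mp (hA hx)).resolve_left fun h => hsA (h ▸ hx))
      ((Submodule.mem_bot _).mpr hA0)
    exact absurd this hne.ne_empty

lemma mem_span_erase_of_sum_eq_zero {A S : Finset M} (hAS : A ⊆ S) (hA : ∑ v ∈ A, v = 0)
    {x : M} (hx : x ∈ A) : x ∈ Submodule.span (ZMod 2) (S.erase x : Set M) := by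
  have : ∑ v ∈ A.erase x, v ∈ Submodule.span (ZMod 2) (S.erase x : Set M) :=
    Submodule.sum_mem _ fun v hv => Submodule.subset_span (erase_subset_erase x hAS hv)
  rwa [sum_erase_eq_of_sum_eq_zero hA hx] at this

lemma span_erase_erase_eq {S A B : Finset M} (hA : A ⊆ S) (hB : B ⊆ S) (hA0 : ∑ v ∈ A, v = 0)
    (hB0 : ∑ v ∈ B, v = 0) {a b : M} (ha : a ∈ A) (hb : b ∈ B) (hbA : b ∉ A) :
    Submodule.span (ZMod 2) ((S.erase b).erase a : Set M) =
      Submodule.span (ZMod 2) (S : Set M) := by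
  have hA' : A ⊆ S.erase b := fun x hx => mem_erase.mpr ⟨fun h => hbA (h ▸ hx), hA hx⟩
  rw [← Submodule.span_insert_eq_span (mem_span_erase_of_sum_eq_zero hA' hA0 ha), ← coe_insert,
    insert_erase (hA' ha), ← Submodule.span_insert_eq_span
      (mem_span_erase_of_sum_eq_zero hB hB0 hb), ← coe_insert, insert_erase (hB hb)]

lemma exists_isUniqueCircuit [FiniteDimensional (ZMod 2) M] {S : Finset M}
    (hcard : #S = Module.finrank (ZMod 2) M + 1)
    (hspan : Submodule.span (ZMod 2) (S : Set M) = ⊤) : ∃ C, IsUniqueCircuit S C := by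
  have hdep : ¬ IndepMod ⊥ S := fun h => by
    have := ((indepMod_bot_iff_linearIndepOn S).mp h).finset_card_le_finrank
    omega
  simp only [IndepMod, Submodule.mem_bot, not_forall] at hdep
  obtain ⟨C, hCS, hC0, hne⟩ := hdep
  have hsub : ∀ A B, A ⊆ S → B ⊆ S → A.Nonempty → ∑ v ∈ A, v = 0 → ∑ v ∈ B, v = 0 → B ⊆ A := by
    intro A B hA hB ⟨a, ha⟩ hA0 hB0 b hb
    by_contra hbA
    have haS : a ∈ S.erase b := mem_erase.mpr ⟨fun h => hbA (h ▸ ha), hA ha⟩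
    have hle := finrank_span_finset_le_card (R := ZMod 2) ((S.erase b).erase a)
    rw [Set.finrank, span_erase_erase_eq hA hB hA0 hB0 ha hb hbA, hspan, finrank_top,
      card_erase_of_mem haS] at hle
    have := card_pos.mpr ⟨a, haS⟩
    have := card_erase_of_mem (hB hb)
    omega
  have hCne := nonempty_iff_ne_empty.mpr hne
  exact ⟨C, hCS, hCne, hC0, fun A hA hAne hA0 =>
    Subset.antisymm (hsub C A hCS hA hCne hC0 hA0) (hsub A C hA hCS hAne hA0 hC0)⟩

lemma IsUniqueCircuit.indepMod_sdiff {S C : Finset M} (h : IsUniqueCircuit S C) :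
    IndepMod (Submodule.span (ZMod 2) (C : Set M)) (S \ C) := by
  intro A hA hAC
  obtain ⟨B, hBC, hBA⟩ := exists_subset_sum_eq_of_mem_span hAC
  have hdisj : Disjoint A B :=
    disjoint_of_subset_left hA (disjoint_of_subset_right hBC sdiff_disjoint)
  by_contra hne
  obtain ⟨a, ha⟩ := nonempty_iff_ne_empty.mpr hne
  have hAB := h.eq_of_subset (A ∪ B) (union_subset (hA.trans sdiff_subset) (hBC.trans h.subset))
    ⟨a, mem_union_left B ha⟩ (by rw [sum_union hdisj, hBA, ZModModule.add_self])
  exact (mem_sdiff.mp (hA ha)).2 (hAB ▸ mem_union_left B ha)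

end Circuit

section FiniteDimensional

variable {K V : Type*} [DivisionRing K] [AddCommGroup V] [Module K V] [FiniteDimensional K V]
  [DecidableEq V]

lemma exists_basis_image_eq {n : ℕ} {T : Finset V} (hT : LinearIndepOn K id (T : Set V))
    (hcard : #T = n) (hn : Module.finrank K V = n) :
    ∃ b : Module.Basis (Fin n) K V, univ.image b = T := by
  let e : Fin n ≃ T := (T.equivFin.trans (finCongr hcard)).symm
  have hli : LinearIndependent K (fun j => (e j : V)) := LinearIndependent.comp hT e e.injective
  refine ⟨basisOfLinearIndependentOfCardEqFinrank' _ hli (by simp [hn]), ?_⟩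
  ext v
  simp only [coe_basisOfLinearIndependentOfCardEqFinrank', mem_image, mem_univ, true_and]
  exact ⟨by rintro ⟨j, rfl⟩; exact (e j).2, fun hv => ⟨e.symm ⟨v, hv⟩, by simp⟩⟩

lemma exists_linearEquiv_image_eq {A B : Finset V} (hA : LinearIndepOn K id (A : Set V))
    (hB : LinearIndepOn K id (B : Set V)) (hAB : #A = #B) :
    ∃ ρ : V ≃ₗ[K] V, A.image ρ = B := by
  let IA := hA.extend (Set.subset_univ _)
  let IB := hB.extend (Set.subset_univ _)
  let bA : Module.Basis IA K V := .extend hA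
  let bB : Module.Basis IB K V := .extend hB
  have := Module.Finite.finite_basis bA
  have := Module.Finite.finite_basis bB
  let _ := Fintype.ofFinite IA
  let _ := Fintype.ofFinite IB
  have hcard (C : Finset V) (I : Set V) [Fintype I] (hC : (C : Set V) ⊆ I) :
      Fintype.card {x : I // (x : V) ∈ C} = #C := by
    rw [Fintype.card_congr (Equiv.subtypeSubtypeEquivSubtype (p := (· ∈ I)) (q := (· ∈ C))
      fun h => hC h)]
    simp
  have hIA : Fintype.card IA = Fintype.card IB := by
    rw [← Module.finrank_eq_card_basis bA, ← Module.finrank_eq_card_basis bB]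
  have hA' := hcard A IA (hA.subset_extend _)
  have hB' := hcard B IB (hB.subset_extend _)
  let e : {x : IA // (x : V) ∈ A} ≃ {y : IB // (y : V) ∈ B} :=
    Fintype.equivOfCardEq (by rw [hA', hB', hAB])
  let f : {x : IA // (x : V) ∉ A} ≃ {y : IB // (y : V) ∉ B} := Fintype.equivOfCardEq (by
    rw [Fintype.card_subtype_compl, Fintype.card_subtype_compl, hIA, hA', hB', hAB])
  let φ : IA ≃ IB := (Equiv.sumCompl _).symm.trans ((Equiv.sumCongr e f).trans (Equiv.sumCompl _))
  refine ⟨bA.equiv bB φ, eq_of_subset_of_card_le (fun y hy => ?_) ?_⟩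
  · obtain ⟨a, ha, rfl⟩ := mem_image.mp hy
    have hbA : bA ⟨a, hA.subset_extend _ ha⟩ = a := congrFun (Module.Basis.coe_extend hA) _
    rw [← hbA, Module.Basis.equiv_apply, show bB _ = _ from congrFun (Module.Basis.coe_extend hB) _]
    simpa [φ, ha] using (e ⟨⟨a, hA.subset_extend _ ha⟩, ha⟩).2
  · rw [card_image_of_injective _ (bA.equiv bB φ).injective, hAB]

end FiniteDimensional

section SqfreeExp

variable {σ : Type*}

noncomputable def sqfreeExp (S : Finset σ) : σ →₀ ℕ := ∑ v ∈ S, Finsupp.single v 1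

lemma degree_sqfreeExp (S : Finset σ) : (sqfreeExp S).degree = #S := by
  simp [sqfreeExp]

lemma monomial_sqfreeExp {R : Type*} [CommSemiring R] (S : Finset σ) :
    monomial (sqfreeExp S) (1 : R) = ∏ v ∈ S, X v := by
  rw [sqfreeExp, monomial_sum_one]
  rfl

lemma mem_support_prod_X_mul {R : Type*} [CommSemiring R] {S : Finset σ}
    {h : MvPolynomial σ R} {μ : σ →₀ ℕ} (hμ : μ ∈ ((∏ v ∈ S, X v) * h).support) :
    ∃ m ∈ h.support, μ = sqfreeExp S + m := by
  rw [← monomial_sqfreeExp, mem_support_iff, coeff_monomial_mul'] at hμ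
  split_ifs at hμ with hle
  · exact ⟨μ - sqfreeExp S, mem_support_iff.mpr (by simpa using hμ),
      (add_tsub_cancel_of_le hle).symm⟩
  · exact absurd rfl hμ

lemma rename_prod_X_mul {τ R : Type*} [CommSemiring R] [DecidableEq τ] {f : σ → τ}
    (hf : Function.Injective f) (S : Finset σ) (h : MvPolynomial σ R) :
    rename f ((∏ v ∈ S, X v) * h) = (∏ v ∈ S.image f, X v) * rename f h := by
  rw [map_mul, map_prod, prod_image hf.injOn]
  simp only [rename_X]

variable [DecidableEq σ]

lemma sqfreeExp_apply (S : Finset σ) (v : σ) : sqfreeExp S v = if v ∈ S then 1 else 0 := by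
  simp [sqfreeExp, Finsupp.finsetSum_apply, Finsupp.single_apply]

@[simp] lemma support_sqfreeExp (S : Finset σ) : (sqfreeExp S).support = S := by
  ext v
  simp [sqfreeExp_apply]

lemma sqfreeExp_union {S T : Finset σ} (h : Disjoint S T) :
    sqfreeExp (S ∪ T) = sqfreeExp S + sqfreeExp T :=
  sum_union h

lemma sqfreeExp_image_univ {ι : Type*} [Fintype ι] {f : ι → σ} (hf : Function.Injective f) :
    sqfreeExp (univ.image f) = ∑ j, Finsupp.single (f j) 1 := by
  rw [sqfreeExp, sum_image fun i _ j _ h => hf h]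

lemma sqfreeExp_le_iff {S : Finset σ} {m : σ →₀ ℕ} : sqfreeExp S ≤ m ↔ S ⊆ m.support := by
  simp only [Finsupp.le_def, sqfreeExp_apply, subset_iff, Finsupp.mem_support_iff]
  refine forall_congr' fun v => ?_
  split_ifs with hv <;> simp [hv, Nat.one_le_iff_ne_zero]

lemma eq_sqfreeExp_support {m : σ →₀ ℕ} (h : ∀ v, m v ≤ 1) : m = sqfreeExp m.support := by
  ext v
  have := h v
  rw [sqfreeExp_apply]
  split_ifs with hv
  · have := Finsupp.mem_support_iff.mp hv
    omega
  · exact Finsupp.notMem_support_iff.mp hv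

end SqfreeExp

section dOp

variable {n : ℕ}

lemma dOp_apply (p : MvPolynomial (Fin n → ZMod 2) (ZMod 2)) : dOp n p = ∑ v, pderiv v p := by
  simp [dOp]

lemma dOp_mul (p q : MvPolynomial (Fin n → ZMod 2) (ZMod 2)) :
    dOp n (p * q) = dOp n p * q + p * dOp n q := by
  simp only [dOp_apply, pderiv_mul, sum_add_distrib, sum_mul, mul_sum]

lemma dOp_X (v : Fin n → ZMod 2) : dOp n (X v) = 1 := by
  simp [dOp_apply, pderiv_X, Pi.single_apply]

lemma dOp_C (a : ZMod 2) : dOp n (C a) = 0 := by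
  simp [dOp_apply]

/-- `d` is a derivation with `d X_v = 1`, so `d (d (p X_v)) = d (d p) X_v + 2 d p`. -/
lemma dOp_dOp (p : MvPolynomial (Fin n → ZMod 2) (ZMod 2)) : dOp n (dOp n p) = 0 := by
  induction p using MvPolynomial.induction_on with
  | C a => rw [dOp_C, map_zero]
  | add p q hp hq => rw [map_add, map_add, hp, hq, add_zero]
  | mul_X p v h => rw [dOp_mul, dOp_X, mul_one, map_add, dOp_mul, h, dOp_X, zero_mul, mul_one,
      zero_add, CharTwo.add_self_eq_zero]

lemma dOp_rename (ρ : (Fin n → ZMod 2) ≃ₗ[ZMod 2] (Fin n → ZMod 2))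
    (p : MvPolynomial (Fin n → ZMod 2) (ZMod 2)) :
    dOp n (rename ρ p) = rename ρ (dOp n p) := by
  rw [dOp_apply, dOp_apply, map_sum, ← ρ.toEquiv.sum_comp]
  exact sum_congr rfl fun v _ => pderiv_rename ρ.injective v p

lemma dOp_prod_X (S : Finset (Fin n → ZMod 2)) :
    dOp n (∏ v ∈ S, X v) = ∑ v ∈ S, ∏ w ∈ S.erase v, X w := by
  induction S using Finset.induction_on with
  | empty => simp [dOp_apply]
  | insert a S ha ih =>
    rw [prod_insert ha, dOp_mul, dOp_X, one_mul, ih, sum_insert ha, erase_insert ha, mul_sum]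
    congr 1
    refine sum_congr rfl fun v hv => ?_
    rw [erase_insert_of_ne (ne_of_mem_of_not_mem hv ha).symm,
      prod_insert fun h => ha (mem_of_mem_erase h)]

lemma exists_le_of_mem_support_dOp {p : MvPolynomial (Fin n → ZMod 2) (ZMod 2)}
    {μ : (Fin n → ZMod 2) →₀ ℕ} (hμ : μ ∈ (dOp n p).support) : ∃ m ∈ p.support, μ ≤ m := by
  rw [mem_support_iff, dOp_apply, coeff_sum] at hμ
  obtain ⟨v, -, hv⟩ := exists_ne_zero_of_sum_ne_zero hμ
  rw [coeff_pderiv] at hv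
  exact ⟨_, mem_support_iff.mpr (left_ne_zero_of_mul hv), le_self_add⟩

end dOp

section CircuitDecomposition

variable {σ R : Type*} [CommSemiring R] [DecidableEq σ] (p : MvPolynomial σ R)
  (c : (σ →₀ ℕ) → Finset σ)

noncomputable def circuitPart (K : Finset σ) : MvPolynomial σ R :=
  ∑ m ∈ p.support with c m = K, monomial m (coeff m p)

noncomputable def circuitCofactor (K : Finset σ) : MvPolynomial σ R :=
  ∑ m ∈ p.support with c m = K, monomial (m - sqfreeExp K) (coeff m p)

lemma sum_circuitPart : ∑ K ∈ p.support.image c, circuitPart p c K = p := by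
  conv_rhs => rw [p.as_sum]
  exact sum_fiberwise_of_maps_to (fun m hm => mem_image_of_mem c hm) _

lemma coeff_circuitPart {m : σ →₀ ℕ} (hm : m ∈ p.support) :
    coeff m (circuitPart p c (c m)) = coeff m p := by
  have hm' : m ∈ {m' ∈ p.support | c m' = c m} := mem_filter.mpr ⟨hm, rfl⟩
  rw [circuitPart, coeff_sum, sum_eq_single_of_mem m hm' fun m' _ h => by
    rw [coeff_monomial, if_neg h], coeff_monomial, if_pos rfl]

variable {p c}

lemma circuitPart_eq {K : Finset σ} (hK : ∀ m ∈ p.support, c m = K → K ⊆ m.support) :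
    circuitPart p c K = (∏ v ∈ K, X v) * circuitCofactor p c K := by
  rw [← monomial_sqfreeExp, circuitCofactor, mul_sum]
  refine sum_congr rfl fun m hm => ?_
  obtain ⟨hm, hcm⟩ := mem_filter.mp hm
  rw [monomial_mul, one_mul, add_tsub_cancel_of_le (sqfreeExp_le_iff.mpr (hK m hm hcm))]

lemma mem_support_circuitPart {K : Finset σ} {μ : σ →₀ ℕ}
    (hμ : μ ∈ (circuitPart p c K).support) : μ ∈ p.support ∧ c μ = K := by
  obtain ⟨m, hm, hμ⟩ := mem_biUnion.mp (support_sum hμ)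
  rw [mem_singleton.mp (support_monomial_subset hμ)]
  exact mem_filter.mp hm

lemma mem_support_circuitCofactor {K : Finset σ} {μ : σ →₀ ℕ}
    (hμ : μ ∈ (circuitCofactor p c K).support) :
    ∃ m ∈ p.support, c m = K ∧ μ = m - sqfreeExp K := by
  obtain ⟨m, hm, hμ⟩ := mem_biUnion.mp (support_sum hμ)
  exact ⟨m, (mem_filter.mp hm).1, (mem_filter.mp hm).2,
    mem_singleton.mp (support_monomial_subset hμ)⟩

end CircuitDecomposition

section Generators

variable {n : ℕ}

lemma card_support_of_isSqFree {d : ℕ} {p : MvPolynomial (Fin n → ZMod 2) (ZMod 2)}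
    (hsq : IsSqFree n p) (hhom : p.IsHomogeneous d) {m : (Fin n → ZMod 2) →₀ ℕ}
    (hm : m ∈ p.support) : #m.support = d := by
  rw [← degree_sqfreeExp, ← eq_sqfreeExp_support (hsq m hm).1, Finsupp.degree_eq_weight_one]
  exact hhom (mem_support_iff.mp hm)

lemma mem_support_prod_X_mul_of_isSqFree {S : Finset (Fin n → ZMod 2)}
    {h : MvPolynomial (Fin n → ZMod 2) (ZMod 2)} (hsq : IsSqFree n h)
    (hdisj : ∀ m ∈ h.support, Disjoint S m.support) {μ : (Fin n → ZMod 2) →₀ ℕ}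
    (hμ : μ ∈ ((∏ v ∈ S, X v) * h).support) : ∃ m ∈ h.support, μ = sqfreeExp (S ∪ m.support) := by
  obtain ⟨m, hm, rfl⟩ := mem_support_prod_X_mul hμ
  refine ⟨m, hm, ?_⟩
  rw [sqfreeExp_union (hdisj m hm), ← eq_sqfreeExp_support (hsq m hm).1]

lemma exists_basis_of_indepMod_bot {T : Finset (Fin n → ZMod 2)} (hT : IndepMod ⊥ T)
    (hcard : #T = n) :
    ∃ b : Module.Basis (Fin n) (ZMod 2) (Fin n → ZMod 2), univ.image b = T :=
  exists_basis_image_eq ((indepMod_bot_iff_linearIndepOn T).mp hT) hcard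
    (Module.finrank_fin_fun _)

/-- The conditions on `h` for `(∏ v ∈ K, X v) * h` to be a generator, where `U` is the span
of the circuit `K`. -/
structure IsCofactor (n d : ℕ) (U : Submodule (ZMod 2) (Fin n → ZMod 2))
    (h : MvPolynomial (Fin n → ZMod 2) (ZMod 2)) : Prop where
  isSqFree : IsSqFree n h
  isHomogeneous : h.IsHomogeneous d
  dOp_eq_zero : dOp n h = 0
  indepMod : ∀ m ∈ h.support, IndepMod U m.support

def circuitGenerators (n : ℕ) : Set (MvPolynomial (Fin n → ZMod 2) (ZMod 2)) :=
  {q | ∃ (K : Finset (Fin n → ZMod 2)) (i : ℕ) (h : MvPolynomial (Fin n → ZMod 2) (ZMod 2)),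
    IsCircuit K ∧ #K = i + 1 ∧ 1 < i ∧ i ≤ n ∧ h ≠ 0 ∧
    IsCofactor n (n - i) (Submodule.span (ZMod 2) (K : Set (Fin n → ZMod 2))) h ∧
    q = (∏ v ∈ K, X v) * h}

lemma memL_prod_X_mul {K : Finset (Fin n → ZMod 2)} {i : ℕ}
    {h : MvPolynomial (Fin n → ZMod 2) (ZMod 2)} (hK : IsCircuit K) (hcard : #K = i + 1)
    (hi : 1 ≤ i) (hin : i ≤ n)
    (hh : IsCofactor n (n - i) (Submodule.span (ZMod 2) (K : Set (Fin n → ZMod 2))) h) :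
    MemL n ((∏ v ∈ K, X v) * h) := by
  have hdisj : ∀ m ∈ h.support, Disjoint K m.support := fun m hm => (hh.indepMod m hm).disjoint
  have hbasis : ∀ m ∈ h.support, ∀ x ∈ K,
      ∃ b : Module.Basis (Fin n) (ZMod 2) (Fin n → ZMod 2), univ.image b = K.erase x ∪ m.support :=
    fun m hm x hx => exists_basis_of_indepMod_bot (hK.indepMod_erase_union (hh.indepMod m hm) hx)
      (by rw [card_union_of_disjoint (disjoint_of_subset_left (erase_subset x K) (hdisj m hm)),
            card_erase_of_mem hx, card_support_of_isSqFree hh.isSqFree hh.isHomogeneous hm]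
          omega)
  refine ⟨fun μ hμ => ?_, ?_, ⟨dOp_dOp _, fun μ hμ => ?_⟩, fun μ hμ => ?_⟩
  · obtain ⟨m, hm, rfl⟩ := mem_support_prod_X_mul_of_isSqFree hh.isSqFree hdisj hμ
    refine ⟨fun v => by rw [sqfreeExp_apply]; split_ifs <;> omega, ?_⟩
    rw [sqfreeExp_apply, if_neg (notMem_union.mpr ⟨hK.zero_notMem (by omega),
      fun h0 => Finsupp.mem_support_iff.mp h0 (hh.isSqFree m hm).2⟩)]
  · convert (IsHomogeneous.prod K (fun v => X v) (fun _ => 1)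
      fun v _ => isHomogeneous_X _ v).mul hh.isHomogeneous using 1
    simp only [sum_const, smul_eq_mul, mul_one, hcard]
    omega
  · rw [dOp_mul, hh.dOp_eq_zero, mul_zero, add_zero, dOp_prod_X, sum_mul] at hμ
    obtain ⟨x, hx, hμ⟩ := mem_biUnion.mp (support_sum hμ)
    obtain ⟨m, hm, rfl⟩ := mem_support_prod_X_mul_of_isSqFree hh.isSqFree
      (fun m hm => disjoint_of_subset_left (erase_subset x K) (hdisj m hm)) hμ
    obtain ⟨b, hb⟩ := hbasis m hm x hx
    exact ⟨b, by rw [← sqfreeExp_image_univ b.injective, hb]⟩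
  · obtain ⟨m, hm, rfl⟩ := mem_support_prod_X_mul_of_isSqFree hh.isSqFree hdisj hμ
    obtain ⟨x, hx⟩ := hK.nonempty
    obtain ⟨b, hb⟩ := hbasis m hm x hx
    rw [support_sqfreeExp, eq_top_iff, ← b.span_eq, ← Set.image_univ, ← coe_univ, ← coe_image, hb]
    exact Submodule.span_mono (union_subset_union (erase_subset x K) le_rfl)

lemma memL_zero : MemL n 0 :=
  ⟨fun m hm => by simp at hm, isHomogeneous_zero _ _ _, ⟨by simp, fun m hm => by simp at hm⟩,
    fun m hm => by simp at hm⟩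

lemma MemL.add {p q : MvPolynomial (Fin n → ZMod 2) (ZMod 2)} (hp : MemL n p) (hq : MemL n q) :
    MemL n (p + q) := by
  have hsupp {P : ((Fin n → ZMod 2) →₀ ℕ) → Prop} {p q : MvPolynomial (Fin n → ZMod 2) (ZMod 2)}
      (hp : ∀ m ∈ p.support, P m) (hq : ∀ m ∈ q.support, P m) : ∀ m ∈ (p + q).support, P m :=
    fun m hm => (mem_union.mp (support_add hm)).elim (hp m) (hq m)
  refine ⟨hsupp hp.1 hq.1, hp.2.1.add hq.2.1, ⟨?_, ?_⟩, hsupp hp.2.2.2 hq.2.2.2⟩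
  · rw [map_add, map_add, hp.2.2.1.1, hq.2.2.1.1, add_zero]
  · rw [map_add]
    exact hsupp hp.2.2.1.2 hq.2.2.1.2

def lSubmodule (n : ℕ) : Submodule (ZMod 2) (MvPolynomial (Fin n → ZMod 2) (ZMod 2)) where
  carrier := {p | MemL n p}
  add_mem' := MemL.add
  zero_mem' := memL_zero
  smul_mem' c p hp := by
    rcases zmod_two_eq_zero_or_eq_one c with rfl | rfl
    · rw [zero_smul]
      exact memL_zero
    · rwa [one_smul]

lemma span_circuitGenerators_le :
    Submodule.span (ZMod 2) (circuitGenerators n) ≤ lSubmodule n := by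
  rw [Submodule.span_le]
  rintro q ⟨K, i, h, hK, hcard, hi, hin, -, hh, rfl⟩
  exact memL_prod_X_mul hK hcard hi.le hin hh

end Generators

section Forward

variable {n : ℕ} {p : MvPolynomial (Fin n → ZMod 2) (ZMod 2)}
  {c : ((Fin n → ZMod 2) →₀ ℕ) → Finset (Fin n → ZMod 2)}

lemma coeff_eq_zero_of_memVstar (hp : MemVstar n p) {K : Finset (Fin n → ZMod 2)}
    (hK : K.Nonempty) (hK0 : ∑ v ∈ K, v = 0) {μ : (Fin n → ZMod 2) →₀ ℕ}
    (hKμ : K ⊆ μ.support) : coeff μ p = 0 := by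
  by_contra hne
  obtain ⟨b, hb⟩ := hp.2 μ (mem_support_iff.mpr hne)
  have hli : IndepMod ⊥ (univ.image b) := by
    rw [indepMod_bot_iff_linearIndepOn, coe_image, coe_univ, Set.image_univ,
      linearIndepOn_id_range_iff b.injective]
    exact b.linearIndependent
  rw [hb, ← sqfreeExp_image_univ b.injective, support_sqfreeExp] at hKμ
  exact hK.ne_empty (hli K hKμ ((Submodule.mem_bot _).mpr hK0))

/-- The monomials of `d(X_K) · h_K` miss a vertex of `K`, since those of `h_K` avoid `K`. -/
lemma coeff_dOp_prod_X_mul_circuitCofactor (hsq : IsSqFree n p) {K : Finset (Fin n → ZMod 2)}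
    {μ : (Fin n → ZMod 2) →₀ ℕ} (hKμ : K ⊆ μ.support) :
    coeff μ (dOp n (∏ v ∈ K, X v) * circuitCofactor p c K) = 0 := by
  rw [dOp_prod_X, sum_mul, coeff_sum]
  refine sum_eq_zero fun x hx => ?_
  rw [← monomial_sqfreeExp, coeff_monomial_mul']
  split_ifs with hle
  · rw [one_mul, ← notMem_support_iff]
    intro hν
    obtain ⟨m, hm, -, hmK⟩ := mem_support_circuitCofactor hν
    have h1 := congrArg (· x) hmK
    have h2 := Finsupp.mem_support_iff.mp (hKμ hx)
    have h3 := (hsq m hm).1 x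
    simp only [Finsupp.tsub_apply, sqfreeExp_apply, mem_erase, ne_eq, not_true_eq_false,
      false_and, if_false, hx, if_true] at h1
    omega
  · rfl

lemma dOp_circuitCofactor_eq_zero (hsq : IsSqFree n p) (hd : MemVstar n (dOp n p))
    (hc : ∀ m ∈ p.support, IsUniqueCircuit m.support (c m)) {m₀ : (Fin n → ZMod 2) →₀ ℕ}
    (hm₀ : m₀ ∈ p.support) : dOp n (circuitCofactor p c (c m₀)) = 0 := by
  set K := c m₀
  have hX : (∏ v ∈ K, X v : MvPolynomial (Fin n → ZMod 2) (ZMod 2)) ≠ 0 :=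
    prod_ne_zero_iff.mpr fun v _ => X_ne_zero v
  suffices h : (∏ v ∈ K, X v) * dOp n (circuitCofactor p c K) = 0 from
    (mul_eq_zero.mp h).resolve_left hX
  ext μ
  rw [coeff_zero]
  by_cases hKμ : K ⊆ μ.support
  · have hother (K') (_ : K' ∈ p.support.image c) (hK' : K' ≠ K) :
        coeff μ (dOp n (circuitPart p c K')) = 0 := by
      by_contra hne
      obtain ⟨m, hm, hμm⟩ := exists_le_of_mem_support_dOp (mem_support_iff.mpr hne)
      obtain ⟨hmp, rfl⟩ := mem_support_circuitPart hm
      exact hK' ((hc m hmp).eq_of_subset K (hKμ.trans (Finsupp.support_mono hμm))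
        (hc m₀ hm₀).nonempty (hc m₀ hm₀).sum_eq_zero).symm
    have h := coeff_eq_zero_of_memVstar hd (hc m₀ hm₀).nonempty (hc m₀ hm₀).sum_eq_zero hKμ
    rw [← sum_circuitPart p c, map_sum, coeff_sum,
      sum_eq_single_of_mem K (mem_image_of_mem c hm₀) hother,
      circuitPart_eq fun m hm hcm => hcm ▸ (hc m hm).subset, dOp_mul, coeff_add,
      coeff_dOp_prod_X_mul_circuitCofactor hsq hKμ, zero_add] at h
    exact h
  · rw [← monomial_sqfreeExp, coeff_monomial_mul', if_neg (mt sqfreeExp_le_iff.mp hKμ)]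

lemma isCofactor_circuitCofactor (hp : MemL n p)
    (hc : ∀ m ∈ p.support, IsUniqueCircuit m.support (c m)) {m₀ : (Fin n → ZMod 2) →₀ ℕ}
    (hm₀ : m₀ ∈ p.support) :
    IsCofactor n (n + 1 - #(c m₀)) (Submodule.span (ZMod 2) (c m₀ : Set (Fin n → ZMod 2)))
      (circuitCofactor p c (c m₀)) := by
  obtain ⟨hsq, hhom, hd, -⟩ := hp
  have hsub (m) (hm : m ∈ p.support) (hcm : c m = c m₀) :
      m - sqfreeExp (c m₀) = sqfreeExp (m.support \ c m₀) := by
    have hKm : c m₀ ⊆ m.support := hcm ▸ (hc m hm).subset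
    conv_lhs => rw [eq_sqfreeExp_support (hsq m hm).1, ← union_sdiff_of_subset hKm,
      sqfreeExp_union disjoint_sdiff, add_tsub_cancel_left]
  refine ⟨fun μ hμ => ?_, ?_, dOp_circuitCofactor_eq_zero hsq hd hc hm₀, fun μ hμ => ?_⟩
  · obtain ⟨m, hm, -, rfl⟩ := mem_support_circuitCofactor hμ
    exact ⟨fun v => tsub_le_self.trans ((hsq m hm).1 v),
      by rw [Finsupp.tsub_apply, (hsq m hm).2, zero_tsub]⟩
  · refine IsHomogeneous.sum _ _ _ fun m hm => isHomogeneous_monomial _ ?_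
    obtain ⟨hm, hcm⟩ := mem_filter.mp hm
    rw [hsub m hm hcm, degree_sqfreeExp, card_sdiff_of_subset (hcm ▸ (hc m hm).subset),
      card_support_of_isSqFree hsq hhom hm]
  · obtain ⟨m, hm, hcm, rfl⟩ := mem_support_circuitCofactor hμ
    rw [hsub m hm hcm, support_sqfreeExp]
    exact hcm ▸ (hc m hm).indepMod_sdiff

lemma circuitPart_mem_circuitGenerators (hp : MemL n p)
    (hc : ∀ m ∈ p.support, IsUniqueCircuit m.support (c m)) {m₀ : (Fin n → ZMod 2) →₀ ℕ}
    (hm₀ : m₀ ∈ p.support) : circuitPart p c (c m₀) ∈ circuitGenerators n := by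
  have hK := (hc m₀ hm₀).isCircuit
  have h3 : 3 ≤ #(c m₀) := hK.three_le_card fun h0 =>
    Finsupp.mem_support_iff.mp ((hc m₀ hm₀).subset h0) (hp.1 m₀ hm₀).2
  have hle : #(c m₀) ≤ n + 1 :=
    card_support_of_isSqFree hp.1 hp.2.1 hm₀ ▸ card_le_card (hc m₀ hm₀).subset
  have hpart : circuitPart p c (c m₀) = (∏ v ∈ c m₀, X v) * circuitCofactor p c (c m₀) :=
    circuitPart_eq fun m hm hcm => hcm ▸ (hc m hm).subset
  refine ⟨c m₀, #(c m₀) - 1, circuitCofactor p c (c m₀), hK, by omega, by omega, by omega,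
    fun h0 => ?_, ?_, hpart⟩
  · have := coeff_circuitPart p c hm₀
    rw [hpart, h0, mul_zero, coeff_zero] at this
    exact mem_support_iff.mp hm₀ this.symm
  · rw [show n - (#(c m₀) - 1) = n + 1 - #(c m₀) by omega]
    exact isCofactor_circuitCofactor hp hc hm₀

lemma mem_span_circuitGenerators_of_memL (hp : MemL n p) :
    p ∈ Submodule.span (ZMod 2) (circuitGenerators n) := by
  choose! c hc using fun m (hm : m ∈ p.support) => exists_isUniqueCircuit (S := m.support)
    (by rw [card_support_of_isSqFree hp.1 hp.2.1 hm, Module.finrank_fin_fun]) (hp.2.2.2 m hm)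
  rw [← sum_circuitPart p c]
  refine Submodule.sum_mem _ fun K hK => ?_
  obtain ⟨m₀, hm₀, rfl⟩ := mem_image.mp hK
  exact Submodule.subset_span (circuitPart_mem_circuitGenerators hp hc hm₀)

end Forward

section Standard

variable {n i : ℕ}

/-- The paper's `e_1, …, e_i`, indexed from `0`. -/
def stdVecs (n i : ℕ) : Finset (Fin n → ZMod 2) :=
  (univ.filter fun k : Fin n => (k : ℕ) < i).image fun k => Pi.single k 1

def stdCircuit (n i : ℕ) : Finset (Fin n → ZMod 2) :=
  insert (∑ v ∈ stdVecs n i, v) (stdVecs n i)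

lemma pi_single_one_injective :
    Function.Injective fun k : Fin n => (Pi.single k (1 : ZMod 2) : Fin n → ZMod 2) := by
  intro k l h
  by_contra hkl
  simpa [Pi.single_apply, hkl] using congr_fun h k

lemma card_stdVecs (hin : i ≤ n) : #(stdVecs n i) = i := by
  rw [stdVecs, card_image_of_injective _ pi_single_one_injective, Fin.card_filter_val_lt]
  omega

lemma indepMod_bot_stdVecs : IndepMod ⊥ (stdVecs n i) := by
  rw [indepMod_bot_iff_linearIndepOn]
  refine LinearIndepOn.mono ((linearIndepOn_id_range_iff (Pi.basisFun _ _).injective).mpr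
    (Pi.basisFun (ZMod 2) (Fin n)).linearIndependent) fun x hx => ?_
  obtain ⟨k, -, rfl⟩ := mem_image.mp hx
  exact ⟨k, Pi.basisFun_apply _ _ k⟩

lemma sum_stdVecs_notMem (hi : 1 < i) (hin : i ≤ n) : ∑ v ∈ stdVecs n i, v ∉ stdVecs n i :=
  sum_notMem_of_indepMod indepMod_bot_stdVecs (by rw [card_stdVecs hin]; omega)

lemma isCircuit_stdCircuit (hi : 1 < i) (hin : i ≤ n) : IsCircuit (stdCircuit n i) :=
  isCircuit_insert_sum indepMod_bot_stdVecs (sum_stdVecs_notMem hi hin)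

lemma card_stdCircuit (hi : 1 < i) (hin : i ≤ n) : #(stdCircuit n i) = i + 1 := by
  rw [stdCircuit, card_insert_of_notMem (sum_stdVecs_notMem hi hin), card_stdVecs hin]

lemma span_stdCircuit : Submodule.span (ZMod 2) (stdCircuit n i : Set (Fin n → ZMod 2)) =
    Submodule.span (ZMod 2) {x | ∃ k : Fin n, (k : ℕ) < i ∧ x = Pi.single k 1} := by
  have hset : {x : Fin n → ZMod 2 | ∃ k : Fin n, (k : ℕ) < i ∧ x = Pi.single k 1} =
      stdVecs n i := by
    ext x
    simp [stdVecs, eq_comm]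
  rw [hset, stdCircuit, coe_insert, Submodule.span_insert_eq_span
    (Submodule.sum_mem _ fun v hv => Submodule.subset_span hv)]

lemma prod_X_mul_X_sum_eq (hi : 1 < i) (hin : i ≤ n) :
    (∏ k ∈ univ.filter (fun k : Fin n => (k : ℕ) < i), X (Pi.single k (1 : ZMod 2))) *
      X (∑ k ∈ univ.filter (fun k : Fin n => (k : ℕ) < i), Pi.single k (1 : ZMod 2)) =
    (∏ v ∈ stdCircuit n i, X v : MvPolynomial (Fin n → ZMod 2) (ZMod 2)) := by
  rw [stdCircuit, prod_insert (sum_stdVecs_notMem hi hin), mul_comm, stdVecs,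
    prod_image pi_single_one_injective.injOn, sum_image pi_single_one_injective.injOn]

end Standard

section Translation

variable {n : ℕ}

lemma span_image_linearEquiv (ρ : (Fin n → ZMod 2) ≃ₗ[ZMod 2] (Fin n → ZMod 2))
    (S : Finset (Fin n → ZMod 2)) :
    Submodule.span (ZMod 2) (S.image ρ : Set (Fin n → ZMod 2)) =
      (Submodule.span (ZMod 2) (S : Set (Fin n → ZMod 2))).map
        (ρ : (Fin n → ZMod 2) →ₗ[ZMod 2] (Fin n → ZMod 2)) := by
  rw [coe_image]
  exact Submodule.span_image (ρ : (Fin n → ZMod 2) →ₗ[ZMod 2] (Fin n → ZMod 2))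

lemma rename_rename_symm (ρ : (Fin n → ZMod 2) ≃ₗ[ZMod 2] (Fin n → ZMod 2))
    (g : MvPolynomial (Fin n → ZMod 2) (ZMod 2)) : rename ρ (rename ρ.symm g) = g := by
  rw [rename_rename, show ⇑ρ ∘ ⇑ρ.symm = id from funext ρ.apply_symm_apply, rename_id,
    AlgHom.id_apply]

lemma IsCofactor.rename {d : ℕ} {U : Submodule (ZMod 2) (Fin n → ZMod 2)}
    {h : MvPolynomial (Fin n → ZMod 2) (ZMod 2)} (hh : IsCofactor n d U h)
    (ρ : (Fin n → ZMod 2) ≃ₗ[ZMod 2] (Fin n → ZMod 2)) :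
    IsCofactor n d (U.map (ρ : (Fin n → ZMod 2) →ₗ[ZMod 2] (Fin n → ZMod 2))) (rename ρ h) := by
  refine ⟨fun μ hμ => ?_, hh.isHomogeneous.rename_isHomogeneous,
    by rw [dOp_rename, hh.dOp_eq_zero, map_zero], fun μ hμ => ?_⟩ <;>
  ( rw [support_rename_of_injective ρ.injective] at hμ
    obtain ⟨m, hm, rfl⟩ := mem_image.mp hμ )
  · have happ (v) : Finsupp.mapDomain ρ m v = m (ρ.symm v) :=
      Finsupp.mapDomain_equiv_apply (f := ρ.toEquiv) m v
    exact ⟨fun v => happ v ▸ (hh.isSqFree m hm).1 _,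
      by rw [happ, map_zero]; exact (hh.isSqFree m hm).2⟩
  · rw [Finsupp.mapDomain_support_of_injective ρ.injective]
    exact (hh.indepMod m hm).image ρ

def stdGenerators (n : ℕ) : Set (MvPolynomial (Fin n → ZMod 2) (ZMod 2)) :=
  {q : MvPolynomial (Fin n → ZMod 2) (ZMod 2) |
    ∃ (ρ : (Fin n → ZMod 2) ≃ₗ[ZMod 2] (Fin n → ZMod 2)) (i : ℕ)
      (h : MvPolynomial (Fin n → ZMod 2) (ZMod 2)),
      1 < i ∧ i ≤ n ∧ h ≠ 0 ∧ IsSqFree n h ∧ h.IsHomogeneous (n - i) ∧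
      dOp n h = 0 ∧
      (i < n → ∀ m ∈ h.support,
        LinearIndependent (ZMod 2)
          (fun v : {x // x ∈ m.support} =>
            (Submodule.span (ZMod 2)
                {x : Fin n → ZMod 2 |
                  ∃ k : Fin n, (k : ℕ) < i ∧ x = Pi.single k 1}).mkQ
              (v : Fin n → ZMod 2))) ∧
      q = rename (⇑ρ)
        ((∏ k ∈ Finset.univ.filter (fun k : Fin n => (k : ℕ) < i),
            X (Pi.single k (1 : ZMod 2))) *
          X (∑ k ∈ Finset.univ.filter (fun k : Fin n => (k : ℕ) < i),
            Pi.single k (1 : ZMod 2)) * h)}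

lemma stdGenerators_subset : stdGenerators n ⊆ circuitGenerators n := by
  rintro q ⟨ρ, i, h, hi, hin, hne, hsq, hhom, hdh, hind, rfl⟩
  have hh : IsCofactor n (n - i) (Submodule.span (ZMod 2) (stdCircuit n i : Set _)) h := by
    refine ⟨hsq, hhom, hdh, fun m hm => ?_⟩
    rw [span_stdCircuit, indepMod_iff_linearIndepOn_mkQ]
    rcases hin.lt_or_eq with hlt | rfl
    · exact hind hlt m hm
    · rw [card_eq_zero.mp (show #m.support = 0 by
        rw [card_support_of_isSqFree hsq hhom hm, Nat.sub_self]), coe_empty]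
      exact linearIndepOn_empty _ _
  refine ⟨(stdCircuit n i).image ρ, i, rename ρ h, (isCircuit_stdCircuit hi hin).image ρ,
    by rw [card_image_of_injective _ ρ.injective, card_stdCircuit hi hin], hi, hin,
    fun h0 => hne (rename_injective _ ρ.injective (h0.trans (map_zero _).symm)), ?_, ?_⟩
  · rw [span_image_linearEquiv]
    exact hh.rename ρ
  · rw [prod_X_mul_X_sum_eq hi hin, rename_prod_X_mul ρ.injective]

lemma circuitGenerators_subset : circuitGenerators n ⊆ stdGenerators n := by
  rintro q ⟨K, i, g, hK, hcard, hi, hin, hne, hg, rfl⟩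
  obtain ⟨x, hx⟩ := hK.nonempty
  obtain ⟨ρ, hρ⟩ := exists_linearEquiv_image_eq
    ((indepMod_bot_iff_linearIndepOn _).mp indepMod_bot_stdVecs)
    ((indepMod_bot_iff_linearIndepOn _).mp (hK.indepMod_erase hx))
    (by rw [card_stdVecs hin, card_erase_of_mem hx, hcard, Nat.add_sub_cancel])
  have hρK : (stdCircuit n i).image ρ = K := by
    rw [stdCircuit, image_insert, ← sum_image_linearEquiv, hρ, hK.sum_erase hx, insert_erase hx]
  have hh := hg.rename ρ.symm
  rw [← span_image_linearEquiv, ← hρK, image_image,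
    show ⇑ρ.symm ∘ ⇑ρ = id from funext ρ.symm_apply_apply, image_id, span_stdCircuit] at hh
  refine ⟨ρ, i, rename ρ.symm g, hi, hin, fun h0 => hne ?_, hh.isSqFree, hh.isHomogeneous,
    hh.dOp_eq_zero, fun _ m hm => (indepMod_iff_linearIndepOn_mkQ _ _).mp (hh.indepMod m hm), ?_⟩
  · rw [← rename_rename_symm ρ g, h0, map_zero]
  · rw [prod_X_mul_X_sum_eq hi hin, rename_prod_X_mul ρ.injective, hρK, rename_rename_symm]

end Translation

theorem L_eq_span_generators_general (n : ℕ)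
    (p : MvPolynomial (Fin n → ZMod 2) (ZMod 2)) :
    MemL n p ↔
      p ∈ Submodule.span (ZMod 2)
        {q : MvPolynomial (Fin n → ZMod 2) (ZMod 2) |
          ∃ (ρ : (Fin n → ZMod 2) ≃ₗ[ZMod 2] (Fin n → ZMod 2)) (i : ℕ)
            (h : MvPolynomial (Fin n → ZMod 2) (ZMod 2)),
            1 < i ∧ i ≤ n ∧ h ≠ 0 ∧ IsSqFree n h ∧ h.IsHomogeneous (n - i) ∧
            dOp n h = 0 ∧
            (i < n → ∀ m ∈ h.support,
              LinearIndependent (ZMod 2)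
                (fun v : {x // x ∈ m.support} =>
                  (Submodule.span (ZMod 2)
                      {x : Fin n → ZMod 2 |
                        ∃ k : Fin n, (k : ℕ) < i ∧ x = Pi.single k 1}).mkQ
                    (v : Fin n → ZMod 2))) ∧
            q = rename (⇑ρ)
              ((∏ k ∈ Finset.univ.filter (fun k : Fin n => (k : ℕ) < i),
                  X (Pi.single k (1 : ZMod 2))) *
                X (∑ k ∈ Finset.univ.filter (fun k : Fin n => (k : ℕ) < i),
                  Pi.single k (1 : ZMod 2)) * h)} := by
  change MemL n p ↔ p ∈ Submodule.span (ZMod 2) (stdGenerators n)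
  rw [stdGenerators_subset.antisymm circuitGenerators_subset]
  exact ⟨mem_span_circuitGenerators_of_memL, fun hp => span_circuitGenerators_le hp⟩

/-- `L_n` equals the span of the polynomials
`ρ(X_{e_1} ⋯ X_{e_i} · X_{e_1+⋯+e_i} · h)` with `1 < i ≤ n`, `ρ` a linear automorphism
of `V`, and `h` a nonzero squarefree homogeneous degree-`(n-i)` polynomial with
`d h = 0` whose monomials have variables that remain linearly independent in
`V / span{e_1, …, e_i}` (when `i < n`). -/
theorem L_eq_span_generators (n : ℕ) (hn : 1 ≤ n)
    (p : MvPolynomial (Fin n → ZMod 2) (ZMod 2)) :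
    MemL n p ↔
      p ∈ Submodule.span (ZMod 2)
        {q : MvPolynomial (Fin n → ZMod 2) (ZMod 2) |
          ∃ (ρ : (Fin n → ZMod 2) ≃ₗ[ZMod 2] (Fin n → ZMod 2)) (i : ℕ)
            (h : MvPolynomial (Fin n → ZMod 2) (ZMod 2)),
            1 < i ∧ i ≤ n ∧ h ≠ 0 ∧ IsSqFree n h ∧ h.IsHomogeneous (n - i) ∧
            dOp n h = 0 ∧
            (i < n → ∀ m ∈ h.support,
              LinearIndependent (ZMod 2)
                (fun v : {x // x ∈ m.support} =>
                  (Submodule.span (ZMod 2)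
                      {x : Fin n → ZMod 2 |
                        ∃ k : Fin n, (k : ℕ) < i ∧ x = Pi.single k 1}).mkQ
                    (v : Fin n → ZMod 2))) ∧
            q = rename (⇑ρ)
              ((∏ k ∈ Finset.univ.filter (fun k : Fin n => (k : ℕ) < i),
                  X (Pi.single k (1 : ZMod 2))) *
                X (∑ k ∈ Finset.univ.filter (fun k : Fin n => (k : ℕ) < i),
                  Pi.single k (1 : ZMod 2)) * h)} :=
  L_eq_span_generators_general n p
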